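/- arXiv:1606.02461 — 2 statements merged into one kernel-verified Lean document; each statement's English description precedes it below -/
import Mathlib

section
/- Let α and β be types, let n ≥ 1, let X_0, …, X_n be sets in α, and let f_1, g_1, …, f_n, g_n : α → β. Define the chain denotations D_n := X_n and D_i := X_i ∩ f_{i+1}⁻¹(g_{i+1} '' D_{i+1}) for 0 ≤ i < n, and the forward query sets Q_0 := X_0 and Q_i := g_i⁻¹(f_i '' Q_{i-1}) for 1 ≤ i ≤ n. If D_0 is nonempty, then X_n ∩ Q_n is nonempty; that is, some element of the set X_n belongs to g_n⁻¹(f_n '' (g_{n-1}⁻¹(f_{n-1} '' (⋯ g_1⁻¹(f_1 '' X_0) ⋯)))). -/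
/-- **Theorem 1 (linear path case).**
Along a path with node denotations `X 0, …, X n` and edge projections
`f i, g i : α → β` (for `1 ≤ i ≤ n`), define the chain denotations
`D n = X n` and `D i = X i ∩ f (i+1) ⁻¹' (g (i+1) '' D (i+1))` for `i < n`,
and the forward query sets `Q 0 = X 0` and `Q i = g i ⁻¹' (f i '' Q (i-1))`
for `1 ≤ i ≤ n`.  If `D 0` is nonempty, then `X n ∩ Q n` is nonempty. -/
theorem dcs_linear_path_query_nonempty {α β : Type*} (n : ℕ) (hn : 1 ≤ n)
    (X : ℕ → Set α) (f g : ℕ → α → β) (D Q : ℕ → Set α)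
    (hDn : D n = X n)
    (hD : ∀ i < n, D i = X i ∩ f (i + 1) ⁻¹' (g (i + 1) '' D (i + 1)))
    (hQ0 : Q 0 = X 0)
    (hQ : ∀ i, 1 ≤ i → i ≤ n → Q i = g i ⁻¹' (f i '' Q (i - 1)))
    (hne : (D 0).Nonempty) :
    (X n ∩ Q n).Nonempty := by
  have key : ∀ i ≤ n, (D i ∩ Q i).Nonempty := by
    intro i
    induction i with
    | zero =>
      intro _
      obtain ⟨x, hx⟩ := hne
      refine ⟨x, hx, ?_⟩
      rw [hQ0]
      have := hD 0 hn
      rw [this] at hx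
      exact hx.1
    | succ k ih =>
      intro hk
      obtain ⟨x, hxD, hxQ⟩ := ih (Nat.le_of_succ_le hk)
      rw [hD k hk] at hxD
      obtain ⟨y, hyD, hyx⟩ := hxD.2
      refine ⟨y, hyD, ?_⟩
      rw [hQ (k+1) (Nat.succ_le_succ (Nat.zero_le k)) hk]
      simp only [Nat.add_sub_cancel]
      exact ⟨x, hxQ, hyx.symm⟩
  obtain ⟨x, hxD, hxQ⟩ := key n le_rfl
  exact ⟨x, hDn ▸ hxD, hxQ⟩
end

section
/- Let α and β be types and define the inductive type of DCS trees over (α, β): a DCS tree is a node carrying a set X ⊆ α together with a finite list of children, each child being a triple (f, g, t) of two functions f, g : α → β and a DCS tree t. Define the denotation recursively by ⟦node X cs⟧ := X ∩ ⋂_{(f,g,t) ∈ cs} f⁻¹(g '' ⟦t⟧). Say that a subtree t is reachable from T along the label list [(f_1,g_1), …, (f_m,g_m)] if either m = 0 and t = T, or T = node X cs, (f_1, g_1, s) ∈ cs for some subtree s, and t is reachable from s along [(f_2,g_2), …, (f_m,g_m)]. Suppose ⟦T⟧ is nonempty, T = node X_0 cs, and t = node Y ds is reachable from T along [(f_1,g_1),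 …, (f_m,g_m)] with m ≥ 1. Then Y ∩ g_m⁻¹(f_m '' (g_{m-1}⁻¹(f_{m-1} '' (⋯ g_1⁻¹(f_1 '' X_0) ⋯)))) is nonempty. -/
/-- A DCS tree over `(α, β)`: a node carries a set `X ⊆ α` together with a
finite list of children, each child being a triple `(f, g, t)` of two
functions `f, g : α → β` and a DCS tree `t`. -/
inductive DCSTree (α β : Type*) where
  | node : Set α → List ((α → β) × (α → β) × DCSTree α β) → DCSTree α β

namespace DCSTree

variable {α β : Type*}

/-- The denotation of a DCS tree:
`⟦node X cs⟧ = X ∩ ⋂ (f,g,t) ∈ cs, f ⁻¹' (g '' ⟦t⟧)`. -/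
def denot : DCSTree α β → Set α
  | node X cs =>
      X ∩ ⋂ c ∈ cs.attach, c.val.1 ⁻¹' (c.val.2.1 '' denot c.val.2.2)
decreasing_by
  obtain ⟨⟨f, g, t⟩, hc⟩ := c
  have h := List.sizeOf_lt_of_mem hc
  simp at h ⊢
  omega

/-- `Reaches T L t` holds iff the subtree `t` is reachable from `T` along the
label list `L`: either `L = []` and `t = T`, or `T = node X cs`,
`L = (f, g) :: L'`, `(f, g, s) ∈ cs` for some subtree `s`, and `t` is
reachable from `s` along `L'`. -/
def Reaches : DCSTree α β → List ((α → β) × (α → β)) → DCSTree α β → Prop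
  | T, [], t => t = T
  | node _ cs, (f, g) :: L, t => ∃ s, (f, g, s) ∈ cs ∧ Reaches s L t

/-- The forward query set built from a starting set `X` along a label list:
`chainQ X [] = X` and `chainQ X ((f, g) :: L) = chainQ (g ⁻¹' (f '' X)) L`,
so that `chainQ X [(f₁,g₁), …, (fₘ,gₘ)]`
is `gₘ⁻¹(fₘ '' ( ⋯ g₁⁻¹(f₁ '' X) ⋯ ))`. -/
def chainQ (X : Set α) : List ((α → β) × (α → β)) → Set α
  | [] => X
  | (f, g) :: L => chainQ (g ⁻¹' (f '' X)) L

theorem denot_node (X : Set α) (cs : List ((α → β) × (α → β) × DCSTree α β)) :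
    denot (node X cs) =
      X ∩ ⋂ c ∈ cs.attach, c.val.1 ⁻¹' (c.val.2.1 '' denot c.val.2.2) := by
  rw [denot]

theorem denot_subset (X : Set α) (cs : List ((α → β) × (α → β) × DCSTree α β)) :
    denot (node X cs) ⊆ X := by
  rw [denot_node]; exact Set.inter_subset_left

theorem key (L : List ((α → β) × (α → β))) :
    ∀ (T t : DCSTree α β) (Q : Set α), Reaches T L t →
      (T.denot ∩ Q).Nonempty → (t.denot ∩ chainQ Q L).Nonempty := by
  induction L with
  | nil =>
    intro T t Q hr hne
    simp only [Reaches] at hr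
    subst hr
    exact hne
  | cons fg L ih =>
    obtain ⟨f, g⟩ := fg
    rintro ⟨X, cs⟩ t Q hr hne
    obtain ⟨s, hs, hrs⟩ := hr
    obtain ⟨x, hxd, hxQ⟩ := hne
    rw [denot_node] at hxd
    have hx2 := hxd.2
    simp only [Set.mem_iInter] at hx2
    have hmem : x ∈ f ⁻¹' (g '' denot s) := hx2 ⟨(f, g, s), hs⟩ (List.mem_attach _ _)
    obtain ⟨y, hyd, hgy⟩ := hmem
    refine ih s t (g ⁻¹' (f '' Q)) hrs ⟨y, hyd, ?_⟩
    exact Set.mem_preimage.mpr (hgy ▸ Set.mem_image_of_mem f hxQ)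

end DCSTree

/-- **Theorem 1 of the paper (paths descending from the root).**
If the denotation of a DCS tree `T = node X₀ cs` is nonempty and the subtree
`t = node Y ds` is reachable from `T` along the nonempty label list
`L = [(f₁,g₁), …, (fₘ,gₘ)]` (`m ≥ 1`), then some element of `Y` belongs to
`gₘ⁻¹(fₘ '' ( ⋯ g₁⁻¹(f₁ '' X₀) ⋯ ))`, i.e. `Y ∩ chainQ X₀ L` is nonempty. -/
theorem dcs_root_path_query_nonempty {α β : Type*}
    (T t : DCSTree α β) (X₀ Y : Set α)
    (cs ds : List ((α → β) × (α → β) × DCSTree α β))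
    (L : List ((α → β) × (α → β)))
    (hT : T = DCSTree.node X₀ cs) (ht : t = DCSTree.node Y ds)
    (hL : L ≠ []) (hreach : DCSTree.Reaches T L t)
    (hne : T.denot.Nonempty) :
    (Y ∩ DCSTree.chainQ X₀ L).Nonempty := by
  subst hT
  have h := DCSTree.key L _ t X₀ hreach
    ⟨hne.choose, hne.choose_spec, DCSTree.denot_subset X₀ cs hne.choose_spec⟩
  obtain ⟨y, hyd, hyc⟩ := h
  subst ht
  exact ⟨y, DCSTree.denot_subset Y ds hyd, hyc⟩
end
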